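/- Let W_ζ be the complex span of the matrices λ_{ij} (with E_{ij} matrix units, indices in {0,...,2^p−1}) over all unordered pairs {i,j} with i XOR j = ζ, and Ŵ_ζ the span of the corresponding λ̂_{ij}. Then for nonzero ζ ≠ η in (Z/2Z)^p: [W_ζ, W_η] ⊆ Ŵ_{ζ XOR η}, [W_ζ, Ŵ_η] ⊆ W_{ζ XOR η}, and [Ŵ_ζ, Ŵ_η] ⊆ Ŵ_{ζ XOR η}. -/

import Mathlib

/-! Index rows and columns by the group `G = (ℤ/2ℤ)^p` and call a matrix graded of degree `ζ`
when its `(a, b)` entry vanishes unless `a - b = ζ`. Degrees add under multiplication, so the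
commutator of matrices of degrees `ζ` and `η` has degree `ζ + η`. Since `a - b = a + b` in `G`,
`W ζ` and `What ζ` are exactly the symmetric and the antisymmetric matrices of degree `ζ`; and as
`(AB - BA)ᵀ = BᵀAᵀ - AᵀBᵀ`, a commutator is antisymmetric when both factors have the same
symmetry type and symmetric otherwise. -/

open Matrix

/-- `λ_{ij} = E_{ij} + E_{ji}`, indices identified with `(ℤ/2ℤ)^p`. -/
noncomputable def lam {p : ℕ} (i j : Fin p → ZMod 2) :
    Matrix (Fin p → ZMod 2) (Fin p → ZMod 2) ℂ :=
  Matrix.single i j 1 + Matrix.single j i 1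

/-- `λ̂_{ij} = -i·E_{ij} + i·E_{ji}` (so `λ̂_{ij} = -λ̂_{ji}`). -/
noncomputable def lamHat {p : ℕ} (i j : Fin p → ZMod 2) :
    Matrix (Fin p → ZMod 2) (Fin p → ZMod 2) ℂ :=
  (-Complex.I) • Matrix.single i j 1 + Complex.I • Matrix.single j i 1

/-- `W_ζ`: span of the `λ_{ij}` over pairs with `i XOR j = ζ`. -/
noncomputable def W {p : ℕ} (ζ : Fin p → ZMod 2) :
    Submodule ℂ (Matrix (Fin p → ZMod 2) (Fin p → ZMod 2) ℂ) :=
  Submodule.span ℂ {A | ∃ i j, i + j = ζ ∧ A = lam i j}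

/-- `Ŵ_ζ`: span of the `λ̂_{ij}` over pairs with `i XOR j = ζ`. -/
noncomputable def What {p : ℕ} (ζ : Fin p → ZMod 2) :
    Submodule ℂ (Matrix (Fin p → ZMod 2) (Fin p → ZMod 2) ℂ) :=
  Submodule.span ℂ {A | ∃ i j, i + j = ζ ∧ A = lamHat i j}

namespace Matrix

section Graded

variable {G : Type*} (R : Type*)

def gradedMatrices [AddGroup G] [Semiring R] (ζ : G) : Submodule R (Matrix G G R) where
  carrier := {A | ∀ a b, a - b ≠ ζ → A a b = 0}
  add_mem' hA hB a b h := by simp [hA a b h, hB a b h]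
  zero_mem' _ _ _ := rfl
  smul_mem' c A hA a b h := by simp [hA a b h]

variable {R}

lemma single_mem_gradedMatrices [AddGroup G] [DecidableEq G] [Semiring R] (a b : G) (c : R) :
    single a b c ∈ gradedMatrices R (a - b) := by
  intro i j hij
  rw [single_apply_of_ne]
  rintro ⟨rfl, rfl⟩
  exact hij rfl

lemma mul_mem_gradedMatrices [AddGroup G] [Fintype G] [Semiring R] {ζ η : G}
    {A B : Matrix G G R} (hA : A ∈ gradedMatrices R ζ) (hB : B ∈ gradedMatrices R η) :
    A * B ∈ gradedMatrices R (ζ + η) := by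
  intro a c hac
  refine Finset.sum_eq_zero fun b _ => ?_
  by_cases hab : a - b = ζ
  · have hbc : b - c ≠ η := fun hbc => hac (by rw [← hab, ← hbc, sub_add_sub_cancel])
    simp [hB b c hbc]
  · simp [hA a b hab]

lemma commutator_mem_gradedMatrices [AddCommGroup G] [Fintype G] [Ring R] {ζ η : G}
    {A B : Matrix G G R} (hA : A ∈ gradedMatrices R ζ) (hB : B ∈ gradedMatrices R η) :
    A * B - B * A ∈ gradedMatrices R (ζ + η) :=
  sub_mem (mul_mem_gradedMatrices hA hB) (add_comm ζ η ▸ mul_mem_gradedMatrices hB hA)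

end Graded

lemma sum_smul_mem_of_ne_zero {m n R M : Type*} [Fintype m] [Fintype n] [Semiring R]
    [AddCommMonoid M] [Module R M] {S : Submodule R M} (A : Matrix m n R) (f : m → n → M)
    (hf : ∀ a b, A a b ≠ 0 → f a b ∈ S) : ∑ a, ∑ b, A a b • f a b ∈ S :=
  S.sum_mem fun a _ => S.sum_mem fun b _ => by
    by_cases h : A a b = 0
    · simp [h]
    · exact S.smul_mem _ (hf a b h)

end Matrix

section GellMann

variable {p : ℕ}

lemma transpose_lam (i j : Fin p → ZMod 2) : (lam i j)ᵀ = lam i j := by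
  simp [lam, transpose_single, add_comm]

lemma transpose_lamHat (i j : Fin p → ZMod 2) : (lamHat i j)ᵀ = -lamHat i j := by
  simp [lamHat, transpose_single, add_comm]

lemma single_mem_gradedMatrices_add (a b : Fin p → ZMod 2) (c : ℂ) :
    single a b c ∈ gradedMatrices ℂ (a + b) :=
  ZModModule.sub_eq_add a b ▸ single_mem_gradedMatrices a b c

lemma lam_mem_gradedMatrices (i j : Fin p → ZMod 2) : lam i j ∈ gradedMatrices ℂ (i + j) :=
  add_mem (single_mem_gradedMatrices_add i j 1)
    (add_comm j i ▸ single_mem_gradedMatrices_add j i 1)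

lemma lamHat_mem_gradedMatrices (i j : Fin p → ZMod 2) :
    lamHat i j ∈ gradedMatrices ℂ (i + j) :=
  add_mem (Submodule.smul_mem _ _ (single_mem_gradedMatrices_add i j 1))
    (Submodule.smul_mem _ _ (add_comm j i ▸ single_mem_gradedMatrices_add j i 1))

variable {ζ : Fin p → ZMod 2} {A : Matrix (Fin p → ZMod 2) (Fin p → ZMod 2) ℂ}

lemma sum_smul_lam : ∑ a, ∑ b, A a b • lam a b = A + Aᵀ := by
  ext i j
  simp [lam, Matrix.sum_apply, single_apply, Finset.sum_add_distrib, ite_and]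

lemma sum_smul_lamHat : ∑ a, ∑ b, A a b • lamHat a b = -Complex.I • (A - Aᵀ) := by
  ext i j
  simp [lamHat, Matrix.sum_apply, single_apply, Finset.sum_add_distrib, ite_and]
  ring

lemma add_eq_of_mem_gradedMatrices {a b : Fin p → ZMod 2} (hA : A ∈ gradedMatrices ℂ ζ)
    (hab : A a b ≠ 0) : a + b = ζ := by
  by_contra h
  exact hab (hA a b (by rwa [ZModModule.sub_eq_add]))

lemma mem_W_iff : A ∈ W ζ ↔ Aᵀ = A ∧ A ∈ gradedMatrices ℂ ζ := by
  constructor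
  · intro hA
    induction hA using Submodule.span_induction with
    | mem _ h =>
      obtain ⟨i, j, rfl, rfl⟩ := h
      exact ⟨transpose_lam i j, lam_mem_gradedMatrices i j⟩
    | zero => exact ⟨transpose_zero, zero_mem _⟩
    | add _ _ _ _ hx hy => exact ⟨by rw [transpose_add, hx.1, hy.1], add_mem hx.2 hy.2⟩
    | smul c _ _ hx => exact ⟨by rw [transpose_smul, hx.1], Submodule.smul_mem _ c hx.2⟩
  · rintro ⟨hsymm, hgr⟩
    have h2A : (2 : ℂ) • A ∈ W ζ := by
      rw [two_smul, ← congrArg (A + ·) hsymm, ← sum_smul_lam]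
      exact sum_smul_mem_of_ne_zero A lam fun a b hab =>
        Submodule.subset_span ⟨a, b, add_eq_of_mem_gradedMatrices hgr hab, rfl⟩
    simpa using (W ζ).smul_mem (2⁻¹ : ℂ) h2A

lemma mem_What_iff : A ∈ What ζ ↔ Aᵀ = -A ∧ A ∈ gradedMatrices ℂ ζ := by
  constructor
  · intro hA
    induction hA using Submodule.span_induction with
    | mem _ h =>
      obtain ⟨i, j, rfl, rfl⟩ := h
      exact ⟨transpose_lamHat i j, lamHat_mem_gradedMatrices i j⟩
    | zero => exact ⟨by simp, zero_mem _⟩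
    | add _ _ _ _ hx hy => exact ⟨by rw [transpose_add, hx.1, hy.1, neg_add], add_mem hx.2 hy.2⟩
    | smul c _ _ hx =>
      exact ⟨by rw [transpose_smul, hx.1, smul_neg], Submodule.smul_mem _ c hx.2⟩
  · rintro ⟨hskew, hgr⟩
    have hcA : (-2 * Complex.I) • A ∈ What ζ := by
      have hsum : (-2 * Complex.I) • A = ∑ a, ∑ b, A a b • lamHat a b := by
        rw [sum_smul_lamHat, hskew, sub_neg_eq_add, ← two_smul ℂ, smul_smul]
        ring_nf
      rw [hsum]
      exact sum_smul_mem_of_ne_zero A lamHat fun a b hab =>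
        Submodule.subset_span ⟨a, b, add_eq_of_mem_gradedMatrices hgr hab, rfl⟩
    have hc : -2 * Complex.I ≠ 0 := by simp
    have := (What ζ).smul_mem (-2 * Complex.I)⁻¹ hcA
    rwa [smul_smul, inv_mul_cancel₀ hc, one_smul] at this

end GellMann

theorem quotient_algebra_closure_general {p : ℕ} (ζ η : Fin p → ZMod 2) :
    (∀ A ∈ W ζ, ∀ B ∈ W η, A * B - B * A ∈ What (ζ + η)) ∧
    (∀ A ∈ W ζ, ∀ B ∈ What η, A * B - B * A ∈ W (ζ + η)) ∧
    (∀ A ∈ What ζ, ∀ B ∈ What η, A * B - B * A ∈ What (ζ + η)) := by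
  simp only [mem_W_iff, mem_What_iff]
  refine ⟨?_, ?_, ?_⟩ <;>
  · rintro A ⟨hAt, hA⟩ B ⟨hBt, hB⟩
    refine ⟨?_, commutator_mem_gradedMatrices hA hB⟩
    rw [transpose_sub, transpose_mul, transpose_mul, hAt, hBt]
    noncomm_ring

/-- Closure conditions: `[W_ζ, W_η] ⊆ Ŵ_{ζ+η}`, `[W_ζ, Ŵ_η] ⊆ W_{ζ+η}`,
`[Ŵ_ζ, Ŵ_η] ⊆ Ŵ_{ζ+η}` for distinct nonzero `ζ, η`. -/
theorem quotient_algebra_closure {p : ℕ} (ζ η : Fin p → ZMod 2)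
    (hζ : ζ ≠ 0) (hη : η ≠ 0) (hne : ζ ≠ η) :
    (∀ A ∈ W ζ, ∀ B ∈ W η, A * B - B * A ∈ What (ζ + η)) ∧
    (∀ A ∈ W ζ, ∀ B ∈ What η, A * B - B * A ∈ W (ζ + η)) ∧
    (∀ A ∈ What ζ, ∀ B ∈ What η, A * B - B * A ∈ What (ζ + η)) :=
  quotient_algebra_closure_general ζ η
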